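/- The stack-aware transformation is multiplicative on well-matched words: if u and v are well-matched, then T(u · v) = T(u) · T(v). -/

import Mathlib

inductive Kind : Type
  | call | ret | internal
deriving DecidableEq

def callCount {α : Type} (k : α → Kind) (w : List α) : ℕ :=
  w.countP (fun a => decide (k a = Kind.call))

def retCount {α : Type} (k : α → Kind) (w : List α) : ℕ :=
  w.countP (fun a => decide (k a = Kind.ret))

/-- A word is well-matched if every prefix has at least as many call symbols as
return symbols, and the total numbers of call and return symbols are equal. -/
def WellMatched {α : Type} (k : α → Kind) (w : List α) : Prop :=
  (∀ p, p <+: w → retCount k p ≤ callCount k p) ∧ callCount k w = retCount k w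

/-- The stack-aware transformation, carrying the stack of unmatched call symbols. -/
def Tgo {α : Type} (k : α → Kind) : List α → List α → List (α ⊕ α × α)
  | _, [] => []
  | st, a :: rest =>
    match k a with
    | Kind.call => Sum.inl a :: Tgo k (a :: st) rest
    | Kind.internal => Sum.inl a :: Tgo k st rest
    | Kind.ret =>
      match st with
      | [] => Sum.inl a :: Tgo k [] rest
      | c :: s => Sum.inr (a, c) :: Tgo k s rest

/-- The stack-aware transformation: each return symbol `r` is replaced by the pair
`(r, c)` where `c` is its matching call symbol; other symbols are kept. -/
def T {α : Type} (k : α → Kind) (w : List α) : List (α ⊕ α × α) :=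
  Tgo k [] w

/-- The stack of unmatched call symbols (head = top) after processing `w`. -/
def stackAfter {α : Type} (k : α → Kind) (w : List α) : List α :=
  w.foldl
    (fun st a =>
      match k a with
      | Kind.call => a :: st
      | Kind.ret => st.tail
      | Kind.internal => st) []

/-- A visibly deterministic pushdown automaton. -/
structure VDPA (α Q : Type) where
  kind : α → Kind
  δcall : Q → α → Q
  δint : Q → α → Q
  /-- return transition: state, input, popped top-of-stack symbol -/
  δret : Q → α → α → Q
  q0 : Q
  F : Set Q

/-- One step of the VDPA on a configuration; `none` means the run has failed
(a pop from the empty stack occurred). -/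
def VDPA.step {α Q : Type} (M : VDPA α Q) :
    Option (Q × List α) → α → Option (Q × List α)
  | none, _ => none
  | some (q, st), a =>
    match M.kind a with
    | Kind.call => some (M.δcall q a, a :: st)
    | Kind.internal => some (M.δint q a, st)
    | Kind.ret =>
      match st with
      | [] => none
      | c :: s => some (M.δret q a c, s)

def VDPA.run {α Q : Type} (M : VDPA α Q) (w : List α) : Option (Q × List α) :=
  w.foldl M.step (some (M.q0, []))

/-- `M` accepts `w` iff processing succeeds and ends in an accepting state with empty stack. -/
def VDPA.Accepts {α Q : Type} (M : VDPA α Q) (w : List α) : Prop :=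
  ∃ q ∈ M.F, M.run w = some (q, [])

/-!
On `u ++ v`, the transformation processes `v` starting from the stack of pending calls left after
`u`. The length of that stack is the number of calls minus the number of returns of `u` (the prefix
condition rules out pops from the empty stack), so it is empty when `u` is well-matched.
-/

section

variable {α : Type} (k : α → Kind)

def stackStep (st : List α) (a : α) : List α :=
  match k a with
  | Kind.call => a :: st
  | Kind.ret => st.tail
  | Kind.internal => st

theorem stackAfter_eq_foldl (w : List α) : stackAfter k w = w.foldl (stackStep k) [] := rfl

theorem stackAfter_append_singleton (w : List α) (a : α) :
    stackAfter k (w ++ [a]) = stackStep k (stackAfter k w) a := by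
  simp only [stackAfter_eq_foldl, List.foldl_append, List.foldl_cons, List.foldl_nil]

-- `Tgo` and `stackStep` both leave the empty stack unchanged on a return, so their stacks agree
-- on every word.
theorem Tgo_append (st u v : List α) :
    Tgo k st (u ++ v) = Tgo k st u ++ Tgo k (u.foldl (stackStep k) st) v := by
  induction u generalizing st with
  | nil => rfl
  | cons a u ih =>
    cases hk : k a <;> cases st <;>
      simp only [List.cons_append, Tgo, hk, ih, List.foldl_cons, stackStep, List.tail]

theorem T_append (u v : List α) : T k (u ++ v) = T k u ++ Tgo k (stackAfter k u) v :=
  Tgo_append k [] u v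

theorem retCount_append_singleton (w : List α) (a : α) :
    retCount k (w ++ [a]) = retCount k w + if k a = Kind.ret then 1 else 0 := by
  simp [retCount, List.countP_append, List.countP_singleton]

theorem callCount_append_singleton (w : List α) (a : α) :
    callCount k (w ++ [a]) = callCount k w + if k a = Kind.call then 1 else 0 := by
  simp [callCount, List.countP_append, List.countP_singleton]

theorem length_stackAfter_add_retCount {w : List α}
    (hw : ∀ p, p <+: w → retCount k p ≤ callCount k p) :
    (stackAfter k w).length + retCount k w = callCount k w := by
  induction w using List.reverseRecOn with
  | nil => rfl
  | append_singleton w a ih =>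
    have hlen := ih fun p hp => hw p (hp.trans (List.prefix_append w [a]))
    have hbound := hw (w ++ [a]) (List.prefix_refl _)
    rw [retCount_append_singleton, callCount_append_singleton] at hbound ⊢
    rw [stackAfter_append_singleton]
    cases hk : k a <;> simp only [hk, stackStep, reduceCtorEq, ↓reduceIte, add_zero, List.length_cons,
      List.length_tail] at hbound ⊢ <;> omega

theorem stackAfter_eq_nil {w : List α} (hw : WellMatched k w) : stackAfter k w = [] := by
  obtain ⟨hprefix, hcount⟩ := hw
  have hlen := length_stackAfter_add_retCount k hprefix
  rw [← List.length_eq_zero_iff]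
  omega

end

theorem transformation_append_general {α : Type} (k : α → Kind) (u v : List α)
    (hu : WellMatched k u) :
    T k (u ++ v) = T k u ++ T k v := by
  rw [T_append, stackAfter_eq_nil k hu]
  rfl

/-- The stack-aware transformation is multiplicative on well-matched words. -/
theorem transformation_append {α : Type} (k : α → Kind) (u v : List α)
    (hu : WellMatched k u) (hv : WellMatched k v) :
    T k (u ++ v) = T k u ++ T k v :=
  transformation_append_general k u v hu
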